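/- Let d = (d_1, …, d_n) be a graphic list and let h be an extreme point of P(d). Then every coordinate of h that does not lie in {0,1} is equal to 1/2. -/

import Mathlib

/-! A symmetric perturbation `y` of `h` that is supported on the fractional pairs and has zero
column sums keeps `h ± ε y` inside `P(d)` for small `ε`, so extremality forces `y = 0`. Hence the
incidence map of the fractional graph `F` is injective, and `F` has at most as many edges as
non-isolated vertices. The fractional entries at a vertex sum to an integer, so no vertex has
`F`-degree `1`; by the handshake lemma every non-isolated vertex then has degree exactly `2`, its
two fractional entries sum to `1`, and `y = h - 1/2` on the edges of `F` is such a perturbation. -/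

open Finset

/-- The polytope `P(d)` of fractional realizations: symmetric arrays with zero
diagonal, off-diagonal entries in `[0,1]`, whose row sums equal the degrees. -/
def degreePolytope {n : ℕ} (d : Fin n → ℕ) : Set (Fin n → Fin n → ℝ) :=
  {x | (∀ i j, x i j = x j i) ∧ (∀ i, x i i = 0) ∧
       (∀ i j, 0 ≤ x i j ∧ x i j ≤ 1) ∧
       (∀ j, ∑ i, x i j = d j)}

/-- `G` is a realization of the degree list `d`. -/
def IsRealization {n : ℕ} (d : Fin n → ℕ) (G : SimpleGraph (Fin n)) : Prop :=
  ∀ i, {j | G.Adj i j}.ncard = d i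

/-- `d` is graphic: it is the degree sequence of a simple graph. -/
def Graphic {n : ℕ} (d : Fin n → ℕ) : Prop :=
  ∃ G : SimpleGraph (Fin n), IsRealization d G

/-- `d` is decisive: every extreme point of `P(d)` has all coordinates in `{0,1}`. -/
def Decisive {n : ℕ} (d : Fin n → ℕ) : Prop :=
  ∀ x ∈ Set.extremePoints ℝ (degreePolytope d), ∀ i j, x i j = 0 ∨ x i j = 1

/-- The graph whose edges are the pairs with nonintegral label. -/
def nonIntegralGraph {n : ℕ} (h : Fin n → Fin n → ℝ) : SimpleGraph (Fin n) :=
  SimpleGraph.fromRel fun i j => h i j ∉ ({0, 1} : Set ℝ)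

/-- A `(3,3)`-blossom in `G`. -/
def Has33Blossom {V : Type*} (G : SimpleGraph V) : Prop :=
  ∃ v1 v2 v3 w1 w2 w3 : V,
    [v1, v2, v3, w1, w2, w3].Pairwise (· ≠ ·) ∧
    ((G.Adj v1 v2 ∧ ¬G.Adj v2 v3 ∧ G.Adj v3 v1 ∧ ¬G.Adj v1 w1 ∧
      G.Adj w1 w2 ∧ ¬G.Adj w2 w3 ∧ G.Adj w3 w1) ∨
     (¬G.Adj v1 v2 ∧ G.Adj v2 v3 ∧ ¬G.Adj v3 v1 ∧ G.Adj v1 w1 ∧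
      ¬G.Adj w1 w2 ∧ G.Adj w2 w3 ∧ ¬G.Adj w3 w1))

/-- A `(k,ℓ)`-blossom in `G`: cycles `v`, `w` with connecting pair `v 0, w 0`,
with the `k + ℓ + 1` pairs alternately edges and non-edges (phase `b`). -/
def HasKLBlossom {V : Type*} (G : SimpleGraph V) (k l : ℕ) : Prop :=
  ∃ (v : ZMod k → V) (w : ZMod l → V) (b : Bool),
    Function.Injective (Sum.elim v w) ∧
    (∀ i : ZMod k, G.Adj (v i) (v (i + 1)) ↔ (Even i.val ↔ b = true)) ∧
    (G.Adj (v 0) (w 0) ↔ b = false) ∧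
    (∀ i : ZMod l, G.Adj (w i) (w (i + 1)) ↔ (Even i.val ↔ b = true))

/-- The 24 forbidden degree multisets of the family `B`. -/
def BDegSeqs : Set (Multiset ℕ) :=
  {{1,1,1,1,1,1}, {2,2,1,1,1,1}, {2,2,2,2,1,1}, {2,2,2,2,2,2},
   {3,2,2,1,1,1}, {3,2,2,2,2,1}, {3,3,2,2,1,1}, {3,3,2,2,2,2},
   {3,3,3,2,2,1}, {3,3,3,3,1,1}, {3,3,3,3,2,2}, {3,3,3,3,3,3},
   {4,2,2,2,1,1}, {4,3,2,2,2,1}, {4,3,3,2,2,2}, {4,3,3,3,2,1},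
   {4,3,3,3,3,2}, {4,4,2,2,2,2}, {4,4,3,3,2,2}, {4,4,3,3,3,1},
   {4,4,3,3,3,3}, {4,4,4,3,3,2}, {4,4,4,4,3,3}, {4,4,4,4,4,4}}

/-- `G` is `B`-free: no six vertices induce a subgraph whose degree multiset is
one of the 24 forbidden degree sequences (equivalently, no induced subgraph is
isomorphic to a member of `B`, since `B` consists of all realizations of them). -/
def BFree {V : Type*} (G : SimpleGraph V) : Prop :=
  ∀ s : Finset V, s.card = 6 →
    (s.val.map fun v => {u | u ∈ s ∧ G.Adj v u}.ncard) ∉ BDegSeqs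

/-- `A` is an independent set in `G`. -/
def IndepOn {V : Type*} (G : SimpleGraph V) (A : Set V) : Prop :=
  ∀ a ∈ A, ∀ b ∈ A, ¬G.Adj a b

/-- `B` is a clique in `G`. -/
def CliqueOn {V : Type*} (G : SimpleGraph V) (B : Set V) : Prop :=
  ∀ a ∈ B, ∀ b ∈ B, a ≠ b → G.Adj a b

/-- `G` is a split graph. -/
def IsSplit {V : Type*} (G : SimpleGraph V) : Prop :=
  ∃ A B : Set V, A ∪ B = Set.univ ∧ Disjoint A B ∧ IndepOn G A ∧ CliqueOn G B

/-- Partition of the vertices into an independent set `V1`, a clique `V2`, and a set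
`V3` each of whose vertices is adjacent to all of `V2` and none of `V1`. -/
def GoodPartition {V : Type*} (G : SimpleGraph V) (V1 V2 V3 : Set V) : Prop :=
  V1 ∪ V2 ∪ V3 = Set.univ ∧ Disjoint V1 V2 ∧ Disjoint V1 V3 ∧ Disjoint V2 V3 ∧
  IndepOn G V1 ∧ CliqueOn G V2 ∧
  (∀ v ∈ V3, ∀ u ∈ V2, G.Adj v u) ∧ (∀ v ∈ V3, ∀ u ∈ V1, ¬G.Adj v u)

/-- `G` is decomposable. -/
def Decomposable {V : Type*} (G : SimpleGraph V) : Prop :=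
  ∃ V1 V2 V3 : Set V, GoodPartition G V1 V2 V3 ∧ (V1 ∪ V2).Nonempty ∧ V3.Nonempty

def Indecomposable {V : Type*} (G : SimpleGraph V) : Prop := ¬Decomposable G

/-- The graph `U`, the unique realization of `(4,2,2,2,2,2)`:
vertices `u=0, a=1, b=2, c=3, d=4, e=5`, edges `ua, ub, uc, ud, ea, eb, cd`. -/
def graphU : SimpleGraph (Fin 6) :=
  SimpleGraph.fromRel fun i j =>
    (i, j) ∈ [((0 : Fin 6), (1 : Fin 6)), (0,2), (0,3), (0,4), (5,1), (5,2), (3,4)]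

/-- `K_2 + K_{1,m}`: disjoint union of an edge and a star with `m` leaves
(star center `Sum.inr 0`). -/
def graphK2PlusStar (m : ℕ) : SimpleGraph (Fin 2 ⊕ Fin (m + 1)) :=
  SimpleGraph.fromRel fun x y =>
    (x = Sum.inl 0 ∧ y = Sum.inl 1) ∨
    (x = Sum.inr 0 ∧ ∃ j : Fin (m + 1), j ≠ 0 ∧ y = Sum.inr j)

/-- `(K_m + K_1) ∨ 2K_1`: the join of (`K_m` plus an isolated vertex)
with two nonadjacent vertices. -/
def graphKmK1Join (m : ℕ) : SimpleGraph (Fin (m + 1) ⊕ Fin 2) :=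
  SimpleGraph.fromRel fun x y =>
    (∃ i j : Fin (m + 1), (i : ℕ) < m ∧ (j : ℕ) < m ∧ i ≠ j ∧
      x = Sum.inl i ∧ y = Sum.inl j) ∨
    (∃ i : Fin (m + 1), ∃ j : Fin 2, x = Sum.inl i ∧ y = Sum.inr j)

/-- The 5-cycle `C_5`. -/
def graphC5 : SimpleGraph (Fin 5) :=
  SimpleGraph.fromRel fun i j =>
    (i, j) ∈ [((0 : Fin 5), (1 : Fin 5)), (1,2), (2,3), (3,4), (4,0)]

/-- The path `P_5` on five vertices. -/
def graphP5 : SimpleGraph (Fin 5) :=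
  SimpleGraph.fromRel fun i j =>
    (i, j) ∈ [((0 : Fin 5), (1 : Fin 5)), (1,2), (2,3), (3,4)]

/-- The house graph: the complement of `P_5`. -/
def graphHouse : SimpleGraph (Fin 5) := graphP5ᶜ

/-- `K_2 + K_3`: disjoint union of an edge and a triangle. -/
def graphK2PlusK3 : SimpleGraph (Fin 5) :=
  SimpleGraph.fromRel fun i j =>
    (i, j) ∈ [((0 : Fin 5), (1 : Fin 5)), (2,3), (3,4), (4,2)]

/-- The complete bipartite graph `K_{2,3}` with parts `{0,1}` and `{2,3,4}`. -/
def graphK23 : SimpleGraph (Fin 5) :=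
  SimpleGraph.fromRel fun i j =>
    (i, j) ∈ [((0 : Fin 5), (2 : Fin 5)), (0,3), (0,4), (1,2), (1,3), (1,4)]

/-- Condition (iii) of the structure theorem for the part `V3`. -/
def SpecialPart {V : Type*} (G : SimpleGraph V) (V3 : Set V) : Prop :=
  IsSplit (G.induce V3) ∨ V3.ncard < 6 ∨
  Nonempty (G.induce V3 ≃g graphU) ∨ Nonempty (G.induce V3 ≃g graphUᶜ) ∨
  (∃ m, 3 ≤ m ∧ Nonempty (G.induce V3 ≃g graphK2PlusStar m)) ∨
  (∃ m, 3 ≤ m ∧ Nonempty (G.induce V3 ≃g graphKmK1Join m))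

/-- The structure described in Theorem 4(4). -/
def HasGoodStructure {V : Type*} (G : SimpleGraph V) : Prop :=
  ∃ V1 V2 V3 : Set V, GoodPartition G V1 V2 V3 ∧ SpecialPart G V3

open scoped Topology

theorem eq_zero_of_add_mem_of_sub_mem_of_mem_extremePoints {𝕜 E : Type*} [Field 𝕜]
    [LinearOrder 𝕜] [IsStrictOrderedRing 𝕜] [AddCommGroup E] [Module 𝕜 E] {A : Set E}
    {x y : E} (hx : x ∈ A.extremePoints 𝕜) (hadd : x + y ∈ A) (hsub : x - y ∈ A) : y = 0 :=
  add_eq_left.mp (hx.2 hadd hsub (mem_openSegment_add_sub x y))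

section degreePolytope

variable {n : ℕ} {d : Fin n → ℕ} {x : Fin n → Fin n → ℝ}

theorem nonIntegralGraph_adj_iff (hx : x ∈ degreePolytope d) {a b : Fin n} :
    (nonIntegralGraph x).Adj a b ↔ x a b ∉ ({0, 1} : Set ℝ) := by
  obtain ⟨hsymm, hdiag, -, -⟩ := hx
  rw [nonIntegralGraph, SimpleGraph.fromRel_adj, hsymm b a, or_self, and_iff_right_iff_imp]
  rintro hab rfl
  exact hab (by simp [hdiag])

theorem mem_Ioo_of_nonIntegralGraph_adj (hx : x ∈ degreePolytope d) {a b : Fin n}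
    (hab : (nonIntegralGraph x).Adj a b) : x a b ∈ Set.Ioo 0 1 := by
  have hne : x a b ≠ 0 ∧ x a b ≠ 1 := by simpa using (nonIntegralGraph_adj_iff hx).1 hab
  obtain ⟨h0, h1⟩ := hx.2.2.1 a b
  exact ⟨h0.lt_of_ne' hne.1, h1.lt_of_ne hne.2⟩

theorem exists_int_sum_neighborFinset_eq [DecidableRel (nonIntegralGraph x).Adj]
    (hx : x ∈ degreePolytope d) (v : Fin n) :
    ∃ z : ℤ, ∑ a ∈ (nonIntegralGraph x).neighborFinset v, x a v = z := by
  set N := (nonIntegralGraph x).neighborFinset v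
  have hrest : ∑ a ∈ Nᶜ, x a v = #{a ∈ Nᶜ | x a v = 1} := by
    rw [← Finset.sum_boole]
    refine Finset.sum_congr rfl fun a ha => ?_
    have hnadj : ¬(nonIntegralGraph x).Adj a v := by
      simpa [N, SimpleGraph.adj_comm] using ha
    have h01 : x a v ∈ ({0, 1} : Set ℝ) :=
      not_not.mp ((nonIntegralGraph_adj_iff hx).not.mp hnadj)
    rcases h01 with h | (h : x a v = 1) <;> simp [h]
  refine ⟨d v - #{a ∈ Nᶜ | x a v = 1}, ?_⟩
  have := Finset.sum_add_sum_compl N (fun a => x a v)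
  rw [hx.2.2.2 v] at this
  push_cast
  linarith

theorem sum_neighborFinset_mem_Ioo [DecidableRel (nonIntegralGraph x).Adj]
    (hx : x ∈ degreePolytope d) {v : Fin n} (hv : (nonIntegralGraph x).degree v ≠ 0) :
    ∑ a ∈ (nonIntegralGraph x).neighborFinset v, x a v ∈
      Set.Ioo 0 ((nonIntegralGraph x).degree v : ℝ) := by
  have hne : ((nonIntegralGraph x).neighborFinset v).Nonempty := by
    rwa [Finset.nonempty_iff_ne_empty, ne_eq, ← Finset.card_eq_zero]
  have hIoo : ∀ a ∈ (nonIntegralGraph x).neighborFinset v, x a v ∈ Set.Ioo 0 1 := fun a ha =>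
    mem_Ioo_of_nonIntegralGraph_adj hx (((nonIntegralGraph x).mem_neighborFinset v a).1 ha).symm
  constructor
  · simpa using Finset.sum_lt_sum_of_nonempty hne fun a ha => (hIoo a ha).1
  · simpa using Finset.sum_lt_sum_of_nonempty hne fun a ha => (hIoo a ha).2

theorem degree_nonIntegralGraph_ne_one [DecidableRel (nonIntegralGraph x).Adj]
    (hx : x ∈ degreePolytope d) (v : Fin n) : (nonIntegralGraph x).degree v ≠ 1 := by
  intro hv
  obtain ⟨z, hz⟩ := exists_int_sum_neighborFinset_eq hx v
  obtain ⟨h0, h1⟩ := sum_neighborFinset_mem_Ioo hx (hv ▸ one_ne_zero)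
  rw [hz] at h0
  rw [hz, hv] at h1
  norm_cast at h0 h1
  omega

theorem sum_neighborFinset_eq_one [DecidableRel (nonIntegralGraph x).Adj]
    (hx : x ∈ degreePolytope d) {v : Fin n} (hv : (nonIntegralGraph x).degree v = 2) :
    ∑ a ∈ (nonIntegralGraph x).neighborFinset v, x a v = 1 := by
  obtain ⟨z, hz⟩ := exists_int_sum_neighborFinset_eq hx v
  obtain ⟨h0, h2⟩ := sum_neighborFinset_mem_Ioo hx (hv ▸ two_ne_zero)
  rw [hz] at h0 ⊢
  rw [hz, hv] at h2
  norm_cast at h0 h2 ⊢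
  omega

theorem eventually_add_smul_mem_degreePolytope (hx : x ∈ degreePolytope d)
    {y : Fin n → Fin n → ℝ} (hsymm : ∀ a b, y a b = y b a)
    (hsupp : ∀ a b, y a b ≠ 0 → (nonIntegralGraph x).Adj a b)
    (hsum : ∀ v, ∑ a, y a v = 0) :
    ∀ᶠ t in 𝓝 (0 : ℝ), x + t • y ∈ degreePolytope d := by
  have hbox : ∀ a b, ∀ᶠ t in 𝓝 (0 : ℝ), x a b + t * y a b ∈ Set.Icc 0 1 := by
    intro a b
    by_cases hy : y a b = 0
    · simpa [hy] using hx.2.2.1 a b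
    obtain ⟨h0, h1⟩ := mem_Ioo_of_nonIntegralGraph_adj hx (hsupp a b hy)
    have hcont : Continuous fun t : ℝ => x a b + t * y a b := by fun_prop
    exact hcont.continuousAt.preimage_mem_nhds (by simpa using Icc_mem_nhds h0 h1)
  have hdiag : ∀ a, y a a = 0 := fun a => by_contra fun hy => (hsupp a a hy).ne rfl
  obtain ⟨hxsymm, hxdiag, -, hxsum⟩ := hx
  filter_upwards [Filter.eventually_all.2 fun a => Filter.eventually_all.2 (hbox a)] with t ht
  refine ⟨fun a b => ?_, fun a => ?_, ht, fun v => ?_⟩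
  · simp [hxsymm a b, hsymm a b]
  · simp [hxdiag a, hdiag a]
  · simp [Finset.sum_add_distrib, ← Finset.mul_sum, hxsum v, hsum v]

theorem eq_zero_of_mem_extremePoints_degreePolytope
    (hx : x ∈ (degreePolytope d).extremePoints ℝ)
    {y : Fin n → Fin n → ℝ} (hsymm : ∀ a b, y a b = y b a)
    (hsupp : ∀ a b, y a b ≠ 0 → (nonIntegralGraph x).Adj a b)
    (hsum : ∀ v, ∑ a, y a v = 0) :
    y = 0 := by
  obtain ⟨ε, hε, hmem⟩ := Metric.eventually_nhds_iff.1 <|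
    eventually_add_smul_mem_degreePolytope hx.1 hsymm hsupp hsum
  have hadd : x + (ε / 2) • y ∈ degreePolytope d := hmem (by simp [abs_of_pos hε, hε])
  have hsub : x - (ε / 2) • y ∈ degreePolytope d := by
    simpa [sub_eq_add_neg] using hmem (y := -(ε / 2)) (by simp [abs_of_pos hε, hε])
  have hsmul := eq_zero_of_add_mem_of_sub_mem_of_mem_extremePoints hx hadd hsub
  exact (smul_eq_zero.1 hsmul).resolve_left (by positivity)

theorem card_edgeFinset_nonIntegralGraph_le [DecidableRel (nonIntegralGraph x).Adj]
    (hx : x ∈ (degreePolytope d).extremePoints ℝ) :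
    #(nonIntegralGraph x).edgeFinset ≤ #{v | (nonIntegralGraph x).degree v ≠ 0} := by
  set S : Finset (Fin n) := {v | (nonIntegralGraph x).degree v ≠ 0}
  let extend : ((nonIntegralGraph x).edgeSet → ℝ) →ₗ[ℝ] (Sym2 (Fin n) → ℝ) :=
    Function.ExtendByZero.linearMap ℝ Subtype.val
  let colSum : (Sym2 (Fin n) → ℝ) →ₗ[ℝ] (S → ℝ) :=
    LinearMap.pi fun v => ∑ a, LinearMap.proj s(a, (v : Fin n))
  have hinj : Function.Injective (colSum ∘ₗ extend) := by
    rw [← LinearMap.ker_eq_bot, LinearMap.ker_eq_bot']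
    intro w hw
    set y : Fin n → Fin n → ℝ := fun a b => extend w s(a, b)
    have hsupp : ∀ a b, y a b ≠ 0 → (nonIntegralGraph x).Adj a b := by
      intro a b hab
      by_contra hnadj
      refine hab (Function.extend_apply' _ _ _ fun ⟨e, he⟩ => hnadj ?_)
      rw [← SimpleGraph.mem_edgeSet, ← he]
      exact e.2
    have hy : y = 0 := by
      refine eq_zero_of_mem_extremePoints_degreePolytope hx (fun a b => by simp [y, Sym2.eq_swap])
        hsupp fun v => ?_
      by_cases hv : v ∈ S
      · simpa [colSum] using congrFun hw ⟨v, hv⟩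
      · refine Finset.sum_eq_zero fun a _ => by_contra fun hav => hv ?_
        simpa [S, ← Nat.pos_iff_ne_zero, SimpleGraph.degree_pos_iff_exists_adj] using
          ⟨a, (hsupp a v hav).symm⟩
    ext ⟨e, he⟩
    induction e using Sym2.ind with
    | h a b =>
      rw [← Subtype.val_injective.extend_apply w 0]
      exact congrFun₂ hy a b
  simpa [SimpleGraph.edgeFinset_card] using LinearMap.finrank_le_finrank_of_injective hinj

theorem degree_nonIntegralGraph_eq_two [DecidableRel (nonIntegralGraph x).Adj]
    (hx : x ∈ (degreePolytope d).extremePoints ℝ) {v : Fin n}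
    (hv : (nonIntegralGraph x).degree v ≠ 0) : (nonIntegralGraph x).degree v = 2 := by
  set S : Finset (Fin n) := {v | (nonIntegralGraph x).degree v ≠ 0}
  have hge : ∀ v ∈ S, 2 ≤ (nonIntegralGraph x).degree v := fun v hv => by
    have := degree_nonIntegralGraph_ne_one hx.1 v
    simp only [S, Finset.mem_filter, Finset.mem_univ, true_and] at hv
    omega
  have hle : ∑ v ∈ S, (nonIntegralGraph x).degree v ≤ ∑ v ∈ S, 2 := by
    rw [Finset.sum_filter_ne_zero, SimpleGraph.sum_degrees_eq_twice_card_edges, Finset.sum_const,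
      smul_eq_mul, mul_comm]
    exact Nat.mul_le_mul_right 2 (card_edgeFinset_nonIntegralGraph_le hx)
  exact ((Finset.sum_eq_sum_iff_of_le hge).1 (le_antisymm (Finset.sum_le_sum hge) hle) v
    (by simpa [S] using hv)).symm

theorem sum_neighborFinset_eq_degree_div_two [DecidableRel (nonIntegralGraph x).Adj]
    (hx : x ∈ (degreePolytope d).extremePoints ℝ) (v : Fin n) :
    ∑ a ∈ (nonIntegralGraph x).neighborFinset v, x a v = (nonIntegralGraph x).degree v / 2 := by
  by_cases hv : (nonIntegralGraph x).degree v = 0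
  · simp [Finset.card_eq_zero.1 hv, hv]
  · rw [sum_neighborFinset_eq_one hx.1 (degree_nonIntegralGraph_eq_two hx hv),
      degree_nonIntegralGraph_eq_two hx hv]
    norm_num

end degreePolytope

theorem extremePoint_nonintegral_coords_eq_half_general {n : ℕ} (d : Fin n → ℕ)
    (h : Fin n → Fin n → ℝ)
    (hh : h ∈ Set.extremePoints ℝ (degreePolytope d)) :
    ∀ i j, h i j ∉ ({0, 1} : Set ℝ) → h i j = 1 / 2 := by
  classical
  let y : Fin n → Fin n → ℝ := fun a b =>
    if (nonIntegralGraph h).Adj a b then h a b - 1 / 2 else 0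
  have hy : y = 0 := by
    refine eq_zero_of_mem_extremePoints_degreePolytope hh (fun a b => ?_)
      (fun a b hab => by_contra fun hnadj => hab (if_neg hnadj)) fun v => ?_
    · simp only [y, SimpleGraph.adj_comm, hh.1.1 a b]
    · calc ∑ a, y a v = ∑ a ∈ (nonIntegralGraph h).neighborFinset v, (h a v - 1 / 2) := by
            simp [y, Finset.sum_ite, SimpleGraph.neighborFinset_eq_filter, SimpleGraph.adj_comm]
        _ = 0 := by
          rw [Finset.sum_sub_distrib, sum_neighborFinset_eq_degree_div_two hh, Finset.sum_const,
            nsmul_eq_mul, SimpleGraph.card_neighborFinset_eq_degree]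
          ring
  intro i j hij
  have hyij := congrFun₂ hy i j
  simp only [y, if_pos ((nonIntegralGraph_adj_iff hh.1).2 hij), Pi.zero_apply] at hyij
  linarith

/-- every nonintegral coordinate of an extreme point of `P(d)` equals `1/2`. -/
theorem extremePoint_nonintegral_coords_eq_half {n : ℕ} (d : Fin n → ℕ)
    (hd : Graphic d) (h : Fin n → Fin n → ℝ)
    (hh : h ∈ Set.extremePoints ℝ (degreePolytope d)) :
    ∀ i j, h i j ∉ ({0, 1} : Set ℝ) → h i j = 1 / 2 :=
  extremePoint_nonintegral_coords_eq_half_general d h hh
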